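/- Let A = a₀ + a₁·i + a₂·j + a₃·k ∈ ℍ_ℂ with a₀, a₁, a₂, a₃ ∈ ℂ, and define the quaternion with real coefficients B = (Im a₃ + Re a₀) + (Re a₁ − Im a₂)·i + (Im a₁ + Re a₂)·j + (Re a₃ − Im a₀)·k, regarded as an element of ℍ_ℂ (with real coefficients coerced into ℂ). Then A·L·A^c = B·L·B^c. -/

import Mathlib

/-!
Write `A = P + 𝕚 Q` with `P`, `Q` quaternions with real coefficients. Since `𝕚` is central and
`𝕚 L = k^c L`, we get `A L = (P + Q k^c) L`, and `P + Q k^c` is exactly `B`. As `L^c = -L`,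
conjugating `A L = B L` gives `L A^c = L B^c`, hence `A L A^c = B L B^c`.
-/

open Quaternion

noncomputable def mkQ (a b c d : ℂ) : Quaternion ℂ := ⟨a, b, c, d⟩

/-- The null quaternion `L = i + 𝕚 j ∈ ℍ_ℂ`. -/
noncomputable def Lq : Quaternion ℂ := mkQ 0 1 Complex.I 0

theorem mul_mul_star_eq_of_mul_eq {R : Type*} [NonUnitalRing R] [StarRing R] {L A B : R}
    (hL : star L = -L) (h : A * L = B * L) : A * L * star A = B * L * star B := by
  have h' : L * star A = L * star B := by
    simpa [hL] using congrArg star h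
  rw [h, mul_assoc, h', ← mul_assoc]

@[simp] theorem re_mkQ (a b c d : ℂ) : (mkQ a b c d).re = a := rfl
@[simp] theorem imI_mkQ (a b c d : ℂ) : (mkQ a b c d).imI = b := rfl
@[simp] theorem imJ_mkQ (a b c d : ℂ) : (mkQ a b c d).imJ = c := rfl
@[simp] theorem imK_mkQ (a b c d : ℂ) : (mkQ a b c d).imK = d := rfl

noncomputable def kQ : ℍ[ℂ] := mkQ 0 0 0 1

noncomputable def rePart (A : ℍ[ℂ]) : ℍ[ℂ] := mkQ A.re.re A.imI.re A.imJ.re A.imK.re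

noncomputable def imPart (A : ℍ[ℂ]) : ℍ[ℂ] := mkQ A.re.im A.imI.im A.imJ.im A.imK.im

theorem star_Lq : star Lq = -Lq := by
  ext <;> simp [Lq]

theorem coe_I_mul_Lq : (Complex.I : ℍ[ℂ]) * Lq = star kQ * Lq := by
  ext <;> simp [Lq, kQ]

theorem rePart_add_I_mul_imPart (A : ℍ[ℂ]) : rePart A + Complex.I * imPart A = A := by
  ext <;> simp [rePart, imPart, mul_comm Complex.I, Complex.re_add_im]

theorem mul_Lq_eq_rePart_add_imPart_mul_star_kQ_mul_Lq (A : ℍ[ℂ]) :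
    A * Lq = (rePart A + imPart A * star kQ) * Lq := by
  conv_lhs => rw [← rePart_add_I_mul_imPart A]
  rw [add_mul, coe_commutes, mul_assoc, coe_I_mul_Lq, add_mul, mul_assoc]

/-- For `A = a₀ + a₁ i + a₂ j + a₃ k ∈ ℍ_ℂ`, the quaternion with real
coefficients `B = (Im a₃ + Re a₀) + (Re a₁ − Im a₂) i + (Im a₁ + Re a₂) j + (Re a₃ − Im a₀) k`
satisfies `A L A^c = B L B^c`. -/
theorem reduction_to_real_preimage (a₀ a₁ a₂ a₃ : ℂ) (A B : Quaternion ℂ)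
    (hA : A = mkQ a₀ a₁ a₂ a₃)
    (hB : B = mkQ ((a₃.im + a₀.re : ℝ) : ℂ) ((a₁.re - a₂.im : ℝ) : ℂ)
      ((a₁.im + a₂.re : ℝ) : ℂ) ((a₃.re - a₀.im : ℝ) : ℂ)) :
    A * Lq * star A = B * Lq * star B := by
  have hB' : B = rePart A + imPart A * star kQ := by
    subst hA hB
    ext <;> simp [rePart, imPart, kQ] <;> ring
  exact mul_mul_star_eq_of_mul_eq star_Lq (hB' ▸ mul_Lq_eq_rePart_add_imPart_mul_star_kQ_mul_Lq A)
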